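/- If voters 1, 2, 3 are such that edges (1,2), (2,3), (3,1) exist in the colorful graph of an approval profile and bear three pairwise distinct colors, then there exist pairwise disjoint voter sets S_1 ∋ 1, S_2 ∋ 2, S_3 ∋ 3 such that the connected components of (1,2), (2,3), (3,1) in the formula graph are exactly S_1 × S_2, S_2 × S_3, and S_3 × S_1 respectively; in particular each of the three colors forms a complete bipartite (biclique) set of directed edges. -/

import Mathlib

/-- Voter `v` strictly prefers candidate `a` to `b`: approves `a` but not `b`. -/
def Pref {m n : ℕ} (P : Fin m → Fin n → Bool) (v : Fin n) (a b : Fin m) : Prop :=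
  P a v = true ∧ P b v = false

/-- The set of NB constraints induced by an approval profile. -/
def CP {m n : ℕ} (P : Fin m → Fin n → Bool) : Set (Fin n × Fin n × Fin n) :=
  {t | ∃ a b, Pref P t.1 a b ∧ Pref P t.2.1 b a ∧ Pref P t.2.2 a b}

/-- Adjacency in the formula graph of the induced NB constraints. -/
def FGAdj {m n : ℕ} (P : Fin m → Fin n → Bool) (u v : Fin n × Fin n) : Prop :=
  ∃ t ∈ CP P, (u = (t.1, t.2.1) ∧ v = (t.2.2, t.2.1)) ∨
              (u = (t.2.1, t.1) ∧ v = (t.2.1, t.2.2))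

/-- Two ordered pairs lie in the same connected component of the formula graph
(i.e. bear the same color, with consistent base orientation). -/
def SameComp {m n : ℕ} (P : Fin m → Fin n → Bool) (u v : Fin n × Fin n) : Prop :=
  Relation.EqvGen (FGAdj P) u v

/-- The directed pair `u` is an edge of the colorful graph (in its base orientation):
its connected component in the formula graph is not a singleton. -/
def ColoredPair {m n : ℕ} (P : Fin m → Fin n → Bool) (u : Fin n × Fin n) : Prop :=
  ∃ w, w ≠ u ∧ SameComp P u w

/-- The two edges bear the same color of the colorful graph (possibly with opposite
base orientations). -/
def SameColor {m n : ℕ} (P : Fin m → Fin n → Bool) (u v : Fin n × Fin n) : Prop :=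
  SameComp P u v ∨ SameComp P u (v.2, v.1)

/-- The formula graph admits a complementary pairs partition: no component contains a
pair of complementary vertices. -/
def Valid {m n : ℕ} (P : Fin m → Fin n → Bool) : Prop :=
  ∀ u : Fin n × Fin n, u.1 ≠ u.2 → ¬ SameComp P u (u.2, u.1)

/-- `O` is an orientation of the colors of the colorful graph: it consists of the
colorful-graph edges, each color is flipped as a whole or not at all, and each edge
appears in exactly one direction. -/
def IsOrient {m n : ℕ} (P : Fin m → Fin n → Bool) (O : Set (Fin n × Fin n)) : Prop :=
  (∀ u ∈ O, ColoredPair P u ∨ ColoredPair P (u.2, u.1)) ∧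
  (∀ u v, SameComp P u v → (u ∈ O ↔ v ∈ O)) ∧
  (∀ a b : Fin n, ¬ ((a, b) ∈ O ∧ (b, a) ∈ O)) ∧
  (∀ a b : Fin n, ColoredPair P (a, b) → (a, b) ∈ O ∨ (b, a) ∈ O)

/-!
Each block `V_pq × V_qp` of pairs (voters preferring `p` to `q`, voters preferring `q` to `p`)
lies in one component of the formula graph, and every edge of the formula graph lies in such a
block. For a triangle whose sides have three distinct colors, a case analysis on the approvals
of the opposite vertex shows that moving one endpoint of a side inside a block keeps the
adjacent sides in their components. Hence every `(x, y)` in the component of `(a, b)` has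
`(y, c)` and `(c, x)` in the components of `(b, c)` and `(c, a)`, which makes each component a
product of the three vertex classes; these are disjoint since no diagonal pair is colored.
-/

theorem Relation.EqvGen.iff_of_forall_iff {α : Type*} {r : α → α → Prop} {Q : α → Prop}
    (hQ : ∀ x y, r x y → (Q x ↔ Q y)) {x y : α} (h : Relation.EqvGen r x y) : Q x ↔ Q y :=
  (Equivalence.eqvGen_iff (r := fun x y => Q x ↔ Q y) ⟨fun _ => Iff.rfl, Iff.symm, Iff.trans⟩).mp
    (h.mono hQ)

section FormulaGraph

variable {m n : ℕ} {P : Fin m → Fin n → Bool}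

def IsConflict (P : Fin m → Fin n → Bool) (u : Fin n × Fin n) : Prop :=
  ∃ p q, Pref P u.1 p q ∧ Pref P u.2 q p

theorem not_isConflict_diag (x : Fin n) : ¬ IsConflict P (x, x) := by
  rintro ⟨p, q, hx, hx'⟩
  exact absurd hx.1 (by simp [hx'.2])

theorem SameComp.refl (u : Fin n × Fin n) : SameComp P u u := Relation.EqvGen.refl u

theorem SameComp.symm {u v : Fin n × Fin n} (h : SameComp P u v) : SameComp P v u :=
  Relation.EqvGen.symm _ _ h

theorem SameComp.trans {u v w : Fin n × Fin n} (h : SameComp P u v) (h' : SameComp P v w) :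
    SameComp P u w :=
  Relation.EqvGen.trans _ _ _ h h'

theorem sameComp_of_pref {p q : Fin m} {i j k l : Fin n} (hi : Pref P i p q) (hj : Pref P j q p)
    (hk : Pref P k p q) (hl : Pref P l q p) : SameComp P (i, j) (k, l) :=
  SameComp.trans (.rel _ _ ⟨(i, j, k), ⟨p, q, hi, hj, hk⟩, .inl ⟨rfl, rfl⟩⟩)
    (.rel _ _ ⟨(j, k, l), ⟨q, p, hj, hk, hl⟩, .inr ⟨rfl, rfl⟩⟩)

theorem FGAdj.symm {u v : Fin n × Fin n} (h : FGAdj P u v) : FGAdj P v u := by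
  obtain ⟨⟨i, j, k⟩, ⟨p, q, hi, hj, hk⟩, ⟨rfl, rfl⟩ | ⟨rfl, rfl⟩⟩ := h
  · exact ⟨(k, j, i), ⟨p, q, hk, hj, hi⟩, .inl ⟨rfl, rfl⟩⟩
  · exact ⟨(k, j, i), ⟨p, q, hk, hj, hi⟩, .inr ⟨rfl, rfl⟩⟩

theorem FGAdj.swap {u v : Fin n × Fin n} (h : FGAdj P u v) : FGAdj P u.swap v.swap := by
  obtain ⟨t, ht, ⟨rfl, rfl⟩ | ⟨rfl, rfl⟩⟩ := h
  · exact ⟨t, ht, .inr ⟨rfl, rfl⟩⟩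
  · exact ⟨t, ht, .inl ⟨rfl, rfl⟩⟩

theorem FGAdj.isConflict_left {u v : Fin n × Fin n} (h : FGAdj P u v) : IsConflict P u := by
  obtain ⟨t, ⟨p, q, hi, hj, -⟩, ⟨rfl, -⟩ | ⟨rfl, -⟩⟩ := h
  exacts [⟨p, q, hi, hj⟩, ⟨q, p, hj, hi⟩]

theorem SameComp.swap {u v : Fin n × Fin n} (h : SameComp P u v) :
    SameComp P u.swap v.swap := by
  induction h with
  | rel x y hxy => exact .rel _ _ hxy.swap
  | refl x => exact .refl _
  | symm x y _ ih => exact ih.symm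
  | trans x y z _ _ ih ih' => exact ih.trans ih'

theorem ColoredPair.of_sameComp {u v : Fin n × Fin n} (hu : ColoredPair P u)
    (h : SameComp P u v) : ColoredPair P v := by
  obtain ⟨w, hwu, hw⟩ := hu
  by_cases hwv : w = v
  · exact ⟨u, hwv ▸ hwu.symm, h.symm⟩
  · exact ⟨w, hwv, h.symm.trans hw⟩

theorem ColoredPair.swap {u : Fin n × Fin n} (h : ColoredPair P u) : ColoredPair P u.swap := by
  obtain ⟨w, hwu, hw⟩ := h
  exact ⟨w.swap, fun h => hwu (Prod.swap_injective h), hw.swap⟩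

theorem ColoredPair.isConflict {u : Fin n × Fin n} (h : ColoredPair P u) : IsConflict P u := by
  by_contra hu
  obtain ⟨w, hwu, hw⟩ := h
  -- without conflict `u` has no neighbours, so its component is `{u}`
  have hsingleton : ∀ x y, FGAdj P x y → (x = u ↔ y = u) := fun x y hxy =>
    iff_of_false (fun hx => hu (hx ▸ hxy.isConflict_left))
      (fun hy => hu (hy ▸ hxy.symm.isConflict_left))
  exact hwu ((Relation.EqvGen.iff_of_forall_iff hsingleton hw).mp rfl)

theorem ColoredPair.not_sameComp_diag {u : Fin n × Fin n} (h : ColoredPair P u) (x : Fin n) :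
    ¬ SameComp P u (x, x) := fun hx =>
  not_isConflict_diag x (h.of_sameComp hx).isConflict

theorem ColoredPair.disjoint_of_eq_prod {u : Fin n × Fin n} {S T : Set (Fin n)}
    (h : ColoredPair P u) (hST : {v | SameComp P u v} = S ×ˢ T) : Disjoint S T :=
  Set.disjoint_left.mpr fun x hS hT =>
    h.not_sameComp_diag x (show (x, x) ∈ {v | SameComp P u v} from hST ▸ ⟨hS, hT⟩)

theorem SameColor.symm {u v : Fin n × Fin n} (h : SameColor P u v) : SameColor P v u :=
  h.elim (fun h => .inl h.symm) (fun h => .inr h.symm.swap)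

theorem SameColor.swap {u v : Fin n × Fin n} (h : SameColor P u v) :
    SameColor P u.swap v.swap :=
  h.elim (fun h => .inl h.swap) (fun h => .inr h.swap)

theorem SameColor.of_sameComp {u v u' v' : Fin n × Fin n} (h : SameColor P u v)
    (hu : SameComp P u u') (hv : SameComp P v v') : SameColor P u' v' :=
  h.elim (fun h => .inl (hu.symm.trans (h.trans hv)))
    (fun h => .inr (hu.symm.trans (h.trans hv.swap)))

end FormulaGraph

structure IsRainbow {m n : ℕ} (P : Fin m → Fin n → Bool) (a b c : Fin n) : Prop where
  colored_ab : ColoredPair P (a, b)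
  colored_bc : ColoredPair P (b, c)
  colored_ca : ColoredPair P (c, a)
  ab_bc : ¬ SameColor P (a, b) (b, c)
  bc_ca : ¬ SameColor P (b, c) (c, a)
  ab_ca : ¬ SameColor P (a, b) (c, a)

namespace IsRainbow

variable {m n : ℕ} {P : Fin m → Fin n → Bool} {a b c : Fin n}

theorem rotate (h : IsRainbow P a b c) : IsRainbow P b c a :=
  ⟨h.colored_bc, h.colored_ca, h.colored_ab, h.bc_ca, fun h' => h.ab_ca h'.symm,
    fun h' => h.ab_bc h'.symm⟩

theorem reverse (h : IsRainbow P a b c) : IsRainbow P b a c :=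
  ⟨h.colored_ab.swap, h.colored_ca.swap, h.colored_bc.swap, fun h' => h.ab_ca h'.swap,
    fun h' => h.bc_ca h'.swap.symm, fun h' => h.ab_bc h'.swap⟩

theorem of_sameComp {a' b' c' : Fin n} (h : IsRainbow P a b c) (hab : SameComp P (a, b) (a', b'))
    (hbc : SameComp P (b, c) (b', c')) (hca : SameComp P (c, a) (c', a')) :
    IsRainbow P a' b' c' :=
  ⟨h.colored_ab.of_sameComp hab, h.colored_bc.of_sameComp hbc, h.colored_ca.of_sameComp hca,
    fun h' => h.ab_bc (h'.of_sameComp hab.symm hbc.symm),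
    fun h' => h.bc_ca (h'.of_sameComp hbc.symm hca.symm),
    fun h' => h.ab_ca (h'.of_sameComp hab.symm hca.symm)⟩

/-- With `c ∈ V_tw`, `x ∈ V_wt` witnessing that `(c, x)` is colored, a case analysis on the
approvals of `c`, `y`, `x'` either finds a block containing both `(c, x)` and `(c, x')`, or a block
that would merge two of the three colors. -/
theorem sameComp_ca_of_pref {x x' y : Fin n} {p q : Fin m} (h : IsRainbow P x y c)
    (hx : Pref P x p q) (hx' : Pref P x' p q) (hy : Pref P y q p) :
    SameComp P (c, x) (c, x') := by
  obtain ⟨t, w, hct, hxw⟩ := h.colored_ca.isConflict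
  have forbidden_x' : ∀ {α β}, Pref P c α β → Pref P x' α β → Pref P y β α → False :=
    fun hc hx'' hy' => h.ab_bc (.inr ((sameComp_of_pref hx hy hx' hy).trans
      (sameComp_of_pref hx'' hy' hc hy')))
  have forbidden_y : ∀ {α β}, Pref P c α β → Pref P y α β → Pref P x β α → False :=
    fun hc hy' hx'' => h.ab_ca (.inr (sameComp_of_pref hc hx'' hy' hx'').swap.symm)
  have hc_qp : ¬ Pref P c q p := fun hc => h.ab_ca (.inr (sameComp_of_pref hx hy hx hc))
  have hc : P p c = P q c := by
    cases hpc : P p c <;> cases hqc : P q c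
    exacts [rfl, (hc_qp ⟨hqc, hpc⟩).elim, (forbidden_x' ⟨hpc, hqc⟩ hx' hy).elim, rfl]
  cases hpc : P p c
  · have hqc := hc ▸ hpc
    cases htx' : P t x'
    · exact sameComp_of_pref ⟨hct.1, hpc⟩ ⟨hx.1, hxw.2⟩ ⟨hct.1, hpc⟩ ⟨hx'.1, htx'⟩
    cases hty : P t y
    · exact (forbidden_x' ⟨hct.1, hqc⟩ ⟨htx', hx'.2⟩ ⟨hy.1, hty⟩).elim
    · exact (forbidden_y ⟨hct.1, hpc⟩ ⟨hty, hy.2⟩ ⟨hx.1, hxw.2⟩).elim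
  · have hqc := hc ▸ hpc
    cases hwx' : P w x'
    · cases hwy : P w y
      · exact (forbidden_y ⟨hqc, hct.2⟩ ⟨hy.1, hwy⟩ ⟨hxw.1, hx.2⟩).elim
      · exact (forbidden_x' ⟨hpc, hct.2⟩ ⟨hx'.1, hwx'⟩ ⟨hwy, hy.2⟩).elim
    · exact sameComp_of_pref ⟨hqc, hct.2⟩ ⟨hxw.1, hx.2⟩ ⟨hqc, hct.2⟩ ⟨hwx', hx'.2⟩

theorem sameComp_of_fgAdj {v : Fin n × Fin n} (h : IsRainbow P a b c) (hv : FGAdj P (a, b) v) :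
    SameComp P (b, c) (v.2, c) ∧ SameComp P (c, a) (c, v.1) := by
  obtain ⟨⟨i, j, k⟩, ⟨p, q, hi, hj, hk⟩, ⟨hu, rfl⟩ | ⟨hu, rfl⟩⟩ := hv <;>
    obtain ⟨rfl, rfl⟩ := Prod.mk.inj hu
  · exact ⟨.refl _, h.sameComp_ca_of_pref hi hk hj⟩
  · exact ⟨(h.reverse.sameComp_ca_of_pref hi hk hj).swap, .refl _⟩

theorem sameComp_sides {u : Fin n × Fin n} (h : IsRainbow P a b c) (hu : SameComp P (a, b) u) :
    SameComp P (b, c) (u.2, c) ∧ SameComp P (c, a) (c, u.1) := by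
  let Q (u : Fin n × Fin n) : Prop :=
    SameComp P (a, b) u ∧ SameComp P (b, c) (u.2, c) ∧ SameComp P (c, a) (c, u.1)
  have hstep : ∀ u v, FGAdj P u v → Q u → Q v := by
    rintro ⟨x, y⟩ v huv ⟨hxy, hy, hx⟩
    obtain ⟨hy', hx'⟩ := (h.of_sameComp hxy hy hx).sameComp_of_fgAdj huv
    exact ⟨hxy.trans (.rel _ _ huv), hy.trans hy', hx.trans hx'⟩
  have hQ : ∀ u v, FGAdj P u v → (Q u ↔ Q v) := fun u v huv =>
    ⟨hstep u v huv, hstep v u huv.symm⟩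
  exact ((Relation.EqvGen.iff_of_forall_iff hQ hu).mp ⟨.refl _, .refl _, .refl _⟩).2

theorem sameComp_iff (h : IsRainbow P a b c) {x y : Fin n} :
    SameComp P (a, b) (x, y) ↔ SameComp P (a, b) (x, b) ∧ SameComp P (b, c) (y, c) := by
  constructor
  · intro hxy
    obtain ⟨hy, hx⟩ := h.sameComp_sides hxy
    exact ⟨(h.rotate.rotate.sameComp_sides hx).1, hy⟩
  · rintro ⟨hx, hy⟩
    have hay : SameComp P (a, b) (a, y) := (h.rotate.sameComp_sides hy).2
    have hcx : SameComp P (c, a) (c, x) := (h.sameComp_sides hx).2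
    have hcay : IsRainbow P c a y := (h.of_sameComp hay hy (.refl _)).rotate.rotate
    exact hay.trans (hcay.sameComp_sides hcx).1

theorem comp_eq_prod (h : IsRainbow P a b c) :
    {u | SameComp P (a, b) u} =
      {x | SameComp P (a, b) (x, b)} ×ˢ {y | SameComp P (b, c) (y, c)} := by
  ext ⟨x, y⟩
  exact h.sameComp_iff

end IsRainbow

theorem stmt13_general {m n : ℕ} (P : Fin m → Fin n → Bool)
    (a b c : Fin n)
    (hab : ColoredPair P (a, b)) (hbc : ColoredPair P (b, c))
    (hca : ColoredPair P (c, a))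
    (h1 : ¬ SameColor P (a, b) (b, c))
    (h2 : ¬ SameColor P (b, c) (c, a))
    (h3 : ¬ SameColor P (a, b) (c, a)) :
    ∃ S1 S2 S3 : Set (Fin n),
      Disjoint S1 S2 ∧ Disjoint S2 S3 ∧ Disjoint S1 S3 ∧
      a ∈ S1 ∧ b ∈ S2 ∧ c ∈ S3 ∧
      {u | SameComp P (a, b) u} = S1 ×ˢ S2 ∧
      {u | SameComp P (b, c) u} = S2 ×ˢ S3 ∧
      {u | SameComp P (c, a) u} = S3 ×ˢ S1 := by
  have h : IsRainbow P a b c := ⟨hab, hbc, hca, h1, h2, h3⟩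
  have hA := h.comp_eq_prod
  have hB := h.rotate.comp_eq_prod
  have hC := h.rotate.rotate.comp_eq_prod
  exact ⟨_, _, _, hab.disjoint_of_eq_prod hA, hbc.disjoint_of_eq_prod hB,
    (hca.disjoint_of_eq_prod hC).symm, .refl _, .refl _, .refl _, hA, hB, hC⟩

/-- if edges `(1,2)`, `(2,3)`, `(3,1)` exist in the colorful graph with three
pairwise distinct colors, then there are pairwise disjoint voter sets `S_1 ∋ 1`, `S_2 ∋ 2`,
`S_3 ∋ 3` such that the components of `(1,2)`, `(2,3)`, `(3,1)` in the formula graph are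
exactly `S_1 × S_2`, `S_2 × S_3`, `S_3 × S_1`: the three colors are biclique colors. -/
theorem stmt13 {m n : ℕ} (P : Fin m → Fin n → Bool) (hvalid : Valid P)
    (a b c : Fin n)
    (hab : ColoredPair P (a, b)) (hbc : ColoredPair P (b, c))
    (hca : ColoredPair P (c, a))
    (h1 : ¬ SameColor P (a, b) (b, c))
    (h2 : ¬ SameColor P (b, c) (c, a))
    (h3 : ¬ SameColor P (a, b) (c, a)) :
    ∃ S1 S2 S3 : Set (Fin n),
      Disjoint S1 S2 ∧ Disjoint S2 S3 ∧ Disjoint S1 S3 ∧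
      a ∈ S1 ∧ b ∈ S2 ∧ c ∈ S3 ∧
      {u | SameComp P (a, b) u} = S1 ×ˢ S2 ∧
      {u | SameComp P (b, c) u} = S2 ×ˢ S3 ∧
      {u | SameComp P (c, a) u} = S3 ×ˢ S1 :=
  stmt13_general P a b c hab hbc hca h1 h2 h3
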